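/- Let γ ∈ (0,1) and α > 0. Let Φ : [0,∞) → ℝ be a nonincreasing, nonnegative function with ∫_{1/2}^∞ Φ(t)^γ dt < ∞, and let g ∈ L¹(ℝ, ℂ) satisfy ∫_ℝ (ln(1 + |u|))^α |g(u)| du < ∞. Suppose δ(x) = (1/2π) ∫_ℝ e^{ixu} g(u) du satisfies |δ(x)| ≤ Φ(|x|) for all x ∈ ℝ, and set δ_{jk}(x) = 2^{j/2} δ(2^j x − k), R_{0α} = (1/π) ∫_ℝ (ln(e^α + |u|/2))^α |g(u)| du, R_{1α} = (1/π) ∫_ℝ (ln(e^α + |u| + 1))^α |g(u)| du, and M = 3Φ(0)^γ + 4∫_{1/2}^∞ Φ(t)^γ dt. Then for all x ≠ y: Σ_{k∈ℤ} |δ_{0k}(x) − δ_{0k}(y)| ≤ 2 R_{0α}^{1−γ} M · (ln(e^α + 1/|x − y|))^{−α(1−γ)}, and for every integer j ≥ 1: Σ_{k∈ℤ} |δ_{jk}(x) − δ_{jk}(y)| ≤ 2^{j/2+1} j^{α(1−γ)} R_{1α}^{1−γ} M · (ln(e^α + 1/|x − y|))^{−α(1−γ)}. -/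

import Mathlib

open MeasureTheory

/-!
Write `h = |x - y|`. The Fourier representation gives
`|δ x - δ y| ≤ (1/2π) ∫ min (2, h |u|) |g u| du`, and since `t ↦ log (e^α + t)^α / t`
decreases, `min (2, h |u|) ≤ 2 log (e^α + |u|/2)^α · log (e^α + 1/h)^(-α)`. This bounds every
`|δ_{0k} x - δ_{0k} y|` by `R₀ log (e^α + 1/h)^(-α)`; for `j ≥ 1` the points are `2^j h` apart
and `log (e^α + 2^(j-1) t) ≤ j log (e^α + t + 1)` gives the bound `j^α R₁ log (e^α + 1/h)^(-α)`.
Interpolating, `|a| ≤ B^(1-γ) |a|^γ ≤ B^(1-γ) (Φ|x - k|^γ + Φ|y - k|^γ)`, and the lattice sums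
`∑ₖ Φ(|x - k|)^γ` are controlled by the integral test.
-/

open Real Set

section Fourier

open Complex in
lemma norm_cexp_mul_sub_cexp_mul_le (x y u : ℝ) :
    ‖cexp (I * x * u) - cexp (I * y * u)‖ ≤ min 2 (|x - y| * |u|) := by
  have hnorm : ∀ v : ℝ, ‖cexp (I * v * u)‖ = 1 := fun v => by
    rw [Complex.norm_exp]; simp
  refine le_min ((norm_sub_le _ _).trans (by rw [hnorm, hnorm]; norm_num)) ?_
  have hfactor : cexp (I * x * u) - cexp (I * y * u) =
      cexp (I * y * u) * (cexp (I * ↑((x - y) * u)) - 1) := by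
    rw [mul_sub, ← Complex.exp_add]; push_cast; ring_nf
  rw [hfactor, norm_mul, hnorm, one_mul, ← abs_mul, ← Real.norm_eq_abs]
  exact Real.norm_exp_I_mul_ofReal_sub_one_le

variable {g δ : ℝ → ℂ}

lemma norm_sub_le_of_min_le_mul (hg : Integrable g)
    (hδ : ∀ x : ℝ, δ x =
      (1 / (2 * (π : ℂ))) * ∫ u : ℝ, Complex.exp (Complex.I * x * u) * g u)
    {x y c : ℝ} {w : ℝ → ℝ} (hw : Integrable fun u => w u * ‖g u‖)
    (hmin : ∀ u, min 2 (|x - y| * |u|) ≤ c * w u) :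
    ‖δ x - δ y‖ ≤ c / (2 * π) * ∫ u, w u * ‖g u‖ := by
  have hint : ∀ v : ℝ, Integrable fun u : ℝ => Complex.exp (Complex.I * v * u) * g u :=
    fun v => hg.bdd_mul (c := 1) (by fun_prop) (ae_of_all _ fun u => by
      rw [Complex.norm_exp]; simp)
  have hdiff : δ x - δ y = (1 / (2 * (π : ℂ))) * ∫ u : ℝ,
      (Complex.exp (Complex.I * x * u) - Complex.exp (Complex.I * y * u)) * g u := by
    simp_rw [hδ, ← mul_sub, ← integral_sub (hint x) (hint y), sub_mul]
  have hconst : ‖1 / (2 * (π : ℂ))‖ = 1 / (2 * π) := by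
    rw [show (2 * (π : ℂ)) = ((2 * π : ℝ) : ℂ) by push_cast; ring, norm_div, norm_one,
      Complex.norm_real, Real.norm_of_nonneg (by positivity)]
  calc ‖δ x - δ y‖ ≤ 1 / (2 * π) * ∫ u, c * w u * ‖g u‖ := by
        rw [hdiff, norm_mul, hconst]
        gcongr
        refine (norm_integral_le_integral_norm _).trans (integral_mono_of_nonneg
          (ae_of_all _ fun u => norm_nonneg _) ?_ (ae_of_all _ fun u => ?_))
        · simpa only [mul_assoc] using hw.const_mul c
        · dsimp only
          rw [norm_mul]
          gcongr
          exact (norm_cexp_mul_sub_cexp_mul_le x y u).trans (hmin u)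
    _ = c / (2 * π) * ∫ u, w u * ‖g u‖ := by
        simp_rw [mul_assoc c, integral_const_mul]
        ring

end Fourier

section LatticeSum

variable {ψ : ℝ → ℝ}

lemma integrableOn_Ioi_of_antitoneOn {a b : ℝ} (hab : a ≤ b) (hanti : AntitoneOn ψ (Ici a))
    (hint : IntegrableOn ψ (Ioi b)) : IntegrableOn ψ (Ioi a) := by
  rw [← Ioc_union_Ioi_eq_Ioi hab]
  exact (((hanti.mono Icc_subset_Ici_self).integrableOn_isCompact isCompact_Icc).mono_set
    Ioc_subset_Icc_self).union hint

lemma setIntegral_Ioi_le_of_antitoneOn {a b : ℝ} (hab : a ≤ b) (hanti : AntitoneOn ψ (Ici a))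
    (hint : IntegrableOn ψ (Ioi b)) :
    ∫ t in Ioi a, ψ t ≤ (b - a) * ψ a + ∫ t in Ioi b, ψ t := by
  have hIoc : IntegrableOn ψ (Ioc a b) :=
    (integrableOn_Ioi_of_antitoneOn hab hanti hint).mono_set Ioc_subset_Ioi_self
  rw [← Ioc_union_Ioi_eq_Ioi hab,
    setIntegral_union Ioc_disjoint_Ioi_same measurableSet_Ioi hIoc hint]
  gcongr
  calc ∫ t in Ioc a b, ψ t ≤ ∫ _ in Ioc a b, ψ a :=
        setIntegral_mono_on hIoc (integrableOn_const measure_Ioc_lt_top.ne) measurableSet_Ioc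
          fun t ht => hanti (mem_Ici.2 le_rfl) ht.1.le ht.1.le
    _ = (b - a) * ψ a := by simp [hab]

lemma summable_and_tsum_int_abs_sub_le (hanti : AntitoneOn ψ (Ici 0))
    (hnonneg : ∀ t ∈ Ici (0 : ℝ), 0 ≤ ψ t) (hint : IntegrableOn ψ (Ioi 0)) (x : ℝ) :
    Summable (fun k : ℤ => ψ |x - k|) ∧
      ∑' k : ℤ, ψ |x - k| ≤ 2 * (ψ 0 + ∫ t in Ioi 0, ψ t) := by
  have hnonneg_Ioi : ∀ t ∈ Ioi (0 : ℝ), 0 ≤ ψ t := fun t ht => hnonneg t (Ioi_subset_Ici_self ht)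
  have hnat := hanti.summable_of_integrableOn_Ioi_zero hint hnonneg_Ioi
  have htsum := hanti.tsum_le_integral hint hnonneg_Ioi
  -- after recentring at `⌊x⌋`, the `n`-th term on either side is at distance at least `n`
  set f : ℤ → ℝ := fun k => ψ |x - (⌊x⌋ - k : ℤ)|
  have hf_nonneg : ∀ k, 0 ≤ f k := fun k => hnonneg _ (mem_Ici.2 (abs_nonneg _))
  have hdist : ∀ k : ℤ, |x - (⌊x⌋ - k : ℤ)| = |Int.fract x + k| := fun k => by
    rw [← Int.self_sub_floor]; push_cast; ring_nf
  have hf_nat : ∀ n : ℕ, f n ≤ ψ n := fun n => by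
    refine hanti (mem_Ici.2 (Nat.cast_nonneg' n)) (mem_Ici.2 (abs_nonneg _)) ?_
    rw [hdist]; push_cast
    exact (le_add_of_nonneg_left (Int.fract_nonneg x)).trans (le_abs_self _)
  have hf_neg : ∀ n : ℕ, f (-(n + 1)) ≤ ψ n := fun n => by
    refine hanti (mem_Ici.2 (Nat.cast_nonneg' n)) (mem_Ici.2 (abs_nonneg _)) ?_
    rw [hdist]; push_cast
    linarith [Int.fract_lt_one x, neg_abs_le (Int.fract x + -((n : ℝ) + 1))]
  have hs₁ : Summable fun n : ℕ => f n := hnat.of_nonneg_of_le (fun _ => hf_nonneg _) hf_nat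
  have hs₂ : Summable fun n : ℕ => f (-(n + 1)) :=
    hnat.of_nonneg_of_le (fun _ => hf_nonneg _) hf_neg
  have hf : f = (fun k : ℤ => ψ |x - k|) ∘ Equiv.subLeft ⌊x⌋ := by
    ext k; simp [f]
  refine ⟨(Equiv.subLeft ⌊x⌋).summable_iff.1 (hf ▸ hs₁.of_nat_of_neg_add_one hs₂), ?_⟩
  rw [← (Equiv.subLeft ⌊x⌋).tsum_eq]
  change ∑' k, f k ≤ _
  rw [tsum_of_nat_of_neg_add_one hs₁ hs₂]
  linarith [hs₁.tsum_le_tsum hf_nat hnat, hs₂.tsum_le_tsum hf_neg hnat]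

end LatticeSum

lemma le_rpow_mul_rpow_of_le {a b c γ : ℝ} (ha : 0 ≤ a) (hab : a ≤ b) (hac : a ≤ c)
    (hγ₀ : 0 ≤ γ) (hγ₁ : γ ≤ 1) : a ≤ b ^ (1 - γ) * c ^ γ :=
  calc a = a ^ (1 - γ) * a ^ γ := by
        rw [← rpow_add' ha (by rw [sub_add_cancel]; exact one_ne_zero), sub_add_cancel, rpow_one]
    _ ≤ b ^ (1 - γ) * c ^ γ := mul_le_mul (rpow_le_rpow ha hab (by linarith))
        (rpow_le_rpow ha hac hγ₀) (rpow_nonneg ha γ) (rpow_nonneg (ha.trans hab) _)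

lemma summable_and_tsum_norm_sub_translates_le {E : Type*} [NormedAddCommGroup E]
    {γ : ℝ} (hγ : γ ∈ Ioo (0 : ℝ) 1) {Φ : ℝ → ℝ} (hΦanti : AntitoneOn Φ (Ici 0))
    (hΦnonneg : ∀ t ∈ Ici (0 : ℝ), 0 ≤ Φ t)
    (hΦγint : IntegrableOn (fun t => Φ t ^ γ) (Ioi (1 / 2)))
    {δ : ℝ → E} (hδdom : ∀ x, ‖δ x‖ ≤ Φ |x|) {x y B : ℝ}
    (hB : ∀ k : ℤ, ‖δ (x - k) - δ (y - k)‖ ≤ B) :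
    Summable (fun k : ℤ => ‖δ (x - k) - δ (y - k)‖) ∧
      ∑' k : ℤ, ‖δ (x - k) - δ (y - k)‖ ≤
        B ^ (1 - γ) * (2 * (3 * Φ 0 ^ γ + 4 * ∫ t in Ioi (1 / 2), Φ t ^ γ)) := by
  obtain ⟨hγ₀, hγ₁⟩ := hγ
  set ψ : ℝ → ℝ := fun t => Φ t ^ γ
  have hψanti : AntitoneOn ψ (Ici 0) := fun a ha b hb hab =>
    rpow_le_rpow (hΦnonneg b hb) (hΦanti ha hb hab) hγ₀.le
  have hψnonneg : ∀ t ∈ Ici (0 : ℝ), 0 ≤ ψ t := fun t ht => rpow_nonneg (hΦnonneg t ht) γ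
  have hψint : IntegrableOn ψ (Ioi 0) := integrableOn_Ioi_of_antitoneOn (by norm_num) hψanti hΦγint
  have hψI := setIntegral_Ioi_le_of_antitoneOn (by norm_num : (0 : ℝ) ≤ 1 / 2) hψanti hΦγint
  have hψ0 := hψnonneg 0 (mem_Ici.2 le_rfl)
  obtain ⟨hsx, htx⟩ := summable_and_tsum_int_abs_sub_le hψanti hψnonneg hψint x
  obtain ⟨hsy, hty⟩ := summable_and_tsum_int_abs_sub_le hψanti hψnonneg hψint y
  have hB0 : 0 ≤ B := (norm_nonneg _).trans (hB 0)
  have hterm : ∀ k : ℤ, ‖δ (x - k) - δ (y - k)‖ ≤ B ^ (1 - γ) * (ψ |x - k| + ψ |y - k|) := by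
    intro k
    have hx := hΦnonneg _ (mem_Ici.2 (abs_nonneg (x - k)))
    have hy := hΦnonneg _ (mem_Ici.2 (abs_nonneg (y - k)))
    refine (le_rpow_mul_rpow_of_le (norm_nonneg _) (hB k)
      ((norm_sub_le _ _).trans (add_le_add (hδdom _) (hδdom _))) hγ₀.le hγ₁.le).trans ?_
    exact mul_le_mul_of_nonneg_left (rpow_add_le_add_rpow hx hy hγ₀.le hγ₁.le)
      (rpow_nonneg hB0 _)
  have hsum := (hsx.add hsy).mul_left (B ^ (1 - γ))
  have hsummable := hsum.of_nonneg_of_le (fun _ => norm_nonneg _) hterm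
  refine ⟨hsummable, (hsummable.tsum_le_tsum hterm hsum).trans ?_⟩
  rw [tsum_mul_left, hsx.tsum_add hsy]
  gcongr
  change _ ≤ 2 * (3 * ψ 0 + 4 * ∫ t in Ioi (1 / 2), ψ t)
  have hI : 0 ≤ ∫ t in Ioi (1 / 2 : ℝ), ψ t := setIntegral_nonneg measurableSet_Ioi
    fun t ht => hψnonneg t (mem_Ici.2 (by norm_num at ht; linarith))
  linarith

lemma summable_and_tsum_norm_sub_translates_le_log_modulus {E : Type*} [NormedAddCommGroup E]
    {γ : ℝ} (hγ : γ ∈ Ioo (0 : ℝ) 1) {Φ : ℝ → ℝ} (hΦanti : AntitoneOn Φ (Ici 0))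
    (hΦnonneg : ∀ t ∈ Ici (0 : ℝ), 0 ≤ Φ t)
    (hΦγint : IntegrableOn (fun t => Φ t ^ γ) (Ioi (1 / 2)))
    {δ : ℝ → E} (hδdom : ∀ x, ‖δ x‖ ≤ Φ |x|) {x y ρ L α : ℝ} (hL : 0 < L)
    (hρ : ∀ k : ℤ, ‖δ (x - k) - δ (y - k)‖ ≤ ρ * L ^ (-α)) :
    Summable (fun k : ℤ => ‖δ (x - k) - δ (y - k)‖) ∧
      ∑' k : ℤ, ‖δ (x - k) - δ (y - k)‖ ≤
        2 * ρ ^ (1 - γ) * (3 * Φ 0 ^ γ + 4 * ∫ t in Ioi (1 / 2), Φ t ^ γ) *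
          L ^ (-(α * (1 - γ))) := by
  obtain ⟨hs, ht⟩ := summable_and_tsum_norm_sub_translates_le hγ hΦanti hΦnonneg hΦγint hδdom hρ
  refine ⟨hs, ht.trans_eq ?_⟩
  have hρ₀ : 0 ≤ ρ :=
    nonneg_of_mul_nonneg_left ((norm_nonneg _).trans (hρ 0)) (rpow_pos_of_pos hL _)
  rw [mul_rpow hρ₀ (rpow_nonneg hL.le _), ← rpow_mul hL.le, neg_mul]
  ring

lemma le_log_exp_add {α t : ℝ} (ht : 0 ≤ t) : α ≤ log (exp α + t) :=
  (log_exp α).symm.le.trans (log_le_log (exp_pos α) (by linarith))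

lemma rpow_add_le_rpow_mul_exp {α L c : ℝ} (hα : 0 ≤ α) (hαL : α ≤ L) (hL : 0 < L)
    (hc : 0 ≤ c) : (L + c) ^ α ≤ L ^ α * exp c :=
  calc (L + c) ^ α = L ^ α * (1 + c / L) ^ α := by
        rw [← mul_rpow hL.le (by positivity), mul_add, mul_one, mul_div_cancel₀ _ hL.ne']
    _ ≤ L ^ α * exp (c / L) ^ α := by
        gcongr
        linarith [add_one_le_exp (c / L)]
    _ ≤ L ^ α * exp c := by
        rw [← exp_mul]
        gcongr
        rw [div_mul_eq_mul_div, div_le_iff₀ hL]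
        exact mul_le_mul_of_nonneg_left hαL hc

/-- `t ↦ log (exp α + t) ^ α / t` is antitone on `(0, ∞)`. -/
lemma mul_log_exp_add_rpow_le {α a b : ℝ} (hα : 0 < α) (ha : 0 ≤ a) (hab : a ≤ b) :
    a * log (exp α + b) ^ α ≤ b * log (exp α + a) ^ α := by
  rcases ha.eq_or_lt with rfl | ha
  · rw [zero_mul]
    exact mul_nonneg (ha.trans hab) (rpow_nonneg (hα.le.trans (le_log_exp_add le_rfl)) α)
  have hb : 0 < b := ha.trans_le hab
  have hL : α ≤ log (exp α + a) := le_log_exp_add ha.le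
  have hsplit : log (exp α + b) ≤ log (exp α + a) + log (b / a) := by
    rw [← log_mul (by positivity) (div_pos hb ha).ne']
    refine log_le_log (by positivity) ?_
    rw [mul_div_assoc', le_div_iff₀ ha]
    nlinarith [exp_pos α]
  calc a * log (exp α + b) ^ α
      ≤ a * (log (exp α + a) + log (b / a)) ^ α :=
        mul_le_mul_of_nonneg_left
          (rpow_le_rpow (hα.le.trans (le_log_exp_add hb.le)) hsplit hα.le) ha.le
    _ ≤ a * (log (exp α + a) ^ α * exp (log (b / a))) :=
        mul_le_mul_of_nonneg_left (rpow_add_le_rpow_mul_exp hα.le hL (hα.trans_le hL)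
          (log_nonneg ((one_le_div ha).2 hab))) ha.le
    _ = b * log (exp α + a) ^ α := by
        rw [exp_log (div_pos hb ha)]; field_simp

lemma min_two_le_log_exp_add_rpow_mul {α h s : ℝ} (hα : 0 < α) (hh : 0 < h) (hs : 0 ≤ s) :
    min 2 (2 * h * s) ≤ 2 * log (exp α + 1 / h) ^ (-α) * log (exp α + s) ^ α := by
  set L := log (exp α + 1 / h)
  set J := log (exp α + s) ^ α
  have hL : 0 < L := hα.trans_le (le_log_exp_add (by positivity))
  have hLα : 0 < L ^ α := rpow_pos_of_pos hL α
  suffices min 2 (2 * h * s) * L ^ α ≤ 2 * J by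
    rwa [rpow_neg hL.le, show 2 * (L ^ α)⁻¹ * J = 2 * J / L ^ α by ring, le_div_iff₀ hLα]
  rcases le_or_gt (1 / h) s with hhs | hhs
  · calc min 2 (2 * h * s) * L ^ α ≤ 2 * L ^ α := by gcongr; exact min_le_left _ _
      _ ≤ 2 * J := by
          gcongr
          exact rpow_le_rpow hL.le (log_le_log (by positivity) (by linarith)) hα.le
  · calc min 2 (2 * h * s) * L ^ α ≤ 2 * h * (s * L ^ α) := by
          rw [← mul_assoc]; gcongr; exact min_le_right _ _
      _ ≤ 2 * h * (1 / h * J) :=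
          mul_le_mul_of_nonneg_left (mul_log_exp_add_rpow_le hα hs hhs.le) (by positivity)
      _ = 2 * J := by field_simp

lemma log_exp_add_two_pow_mul_le {α t : ℝ} (hα : 0 ≤ α) (n : ℕ) (ht : 0 ≤ t) :
    log (exp α + 2 ^ n * t) ≤ (n + 1) * log (exp α + t + 1) := by
  have hexp : 1 ≤ exp α := one_le_exp hα
  have hpow : exp α + 2 ^ n * t ≤ (exp α + t + 1) ^ (n + 1) :=
    calc exp α + 2 ^ n * t ≤ 2 ^ n * (exp α + t) := by
          nlinarith [one_le_pow₀ (M₀ := ℝ) (one_le_two) (n := n)]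
      _ ≤ (exp α + t + 1) ^ n * (exp α + t + 1) :=
          mul_le_mul (pow_le_pow_left₀ zero_le_two (by linarith) n) (by linarith)
            (by positivity) (by positivity)
      _ = (exp α + t + 1) ^ (n + 1) := (pow_succ _ n).symm
  calc log (exp α + 2 ^ n * t) ≤ log ((exp α + t + 1) ^ (n + 1)) :=
        log_le_log (by positivity) hpow
    _ = (n + 1) * log (exp α + t + 1) := by rw [log_pow]; push_cast; ring

lemma Real.add_rpow_le_two_rpow_mul_rpow_add_rpow {a b p : ℝ} (ha : 0 ≤ a) (hb : 0 ≤ b)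
    (hp : 0 ≤ p) : (a + b) ^ p ≤ 2 ^ p * (a ^ p + b ^ p) :=
  calc (a + b) ^ p ≤ (2 * max a b) ^ p := by
        gcongr
        rw [two_mul]
        exact add_le_add (le_max_left a b) (le_max_right a b)
    _ = 2 ^ p * max a b ^ p := mul_rpow zero_le_two (ha.trans (le_max_left a b))
    _ ≤ 2 ^ p * (a ^ p + b ^ p) := by
        gcongr
        rcases max_cases a b with ⟨h, -⟩ | ⟨h, -⟩ <;> rw [h]
        · exact le_add_of_nonneg_right (rpow_nonneg hb p)
        · exact le_add_of_nonneg_left (rpow_nonneg ha p)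

lemma log_add_le_log_add_log_one_add {a t : ℝ} (ha : 1 ≤ a) (ht : 0 ≤ t) :
    log (a + t) ≤ log a + log (1 + t) := by
  rw [← log_mul (by positivity) (by positivity)]
  exact log_le_log (by positivity) (by nlinarith)

lemma integrable_rpow_mul_norm_of_le_const_add_log {E : Type*} [NormedAddCommGroup E]
    {g : ℝ → E} {α C : ℝ} {w : ℝ → ℝ} (hα : 0 ≤ α) (hC : 0 ≤ C) (hw : Measurable w)
    (hw₀ : ∀ u, 0 ≤ w u) (hwC : ∀ u, w u ≤ C + log (1 + |u|)) (hg : Integrable g)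
    (hglog : Integrable fun u => log (1 + |u|) ^ α * ‖g u‖) :
    Integrable fun u => w u ^ α * ‖g u‖ := by
  refine Integrable.mono' ((hg.norm.const_mul (2 ^ α * C ^ α)).add (hglog.const_mul (2 ^ α)))
    ((hw.pow_const α).aestronglyMeasurable.mul hg.norm.aestronglyMeasurable)
    (ae_of_all _ fun u => ?_)
  have hlog : 0 ≤ log (1 + |u|) := log_nonneg (by linarith [abs_nonneg u])
  rw [Real.norm_of_nonneg (mul_nonneg (rpow_nonneg (hw₀ u) α) (norm_nonneg _))]
  calc w u ^ α * ‖g u‖ ≤ (C + log (1 + |u|)) ^ α * ‖g u‖ := by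
        gcongr
        · exact hw₀ u
        · exact hwC u
    _ ≤ 2 ^ α * (C ^ α + log (1 + |u|) ^ α) * ‖g u‖ := by
        gcongr
        exact Real.add_rpow_le_two_rpow_mul_rpow_add_rpow hC hlog hα
    _ = 2 ^ α * C ^ α * ‖g u‖ + 2 ^ α * (log (1 + |u|) ^ α * ‖g u‖) := by ring

section LogModulus

variable {α : ℝ} {g δ : ℝ → ℂ}

lemma norm_sub_le_log_modulus (hα : 0 < α) (hg : Integrable g)
    (hglog : Integrable fun u : ℝ => log (1 + |u|) ^ α * ‖g u‖)
    (hδ : ∀ x : ℝ, δ x =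
      (1 / (2 * (π : ℂ))) * ∫ u : ℝ, Complex.exp (Complex.I * x * u) * g u)
    {x y : ℝ} (hxy : x ≠ y) :
    ‖δ x - δ y‖ ≤ (1 / π) * (∫ u : ℝ, log (exp α + |u| / 2) ^ α * ‖g u‖) *
      log (exp α + 1 / |x - y|) ^ (-α) := by
  have hh : 0 < |x - y| := abs_pos.2 (sub_ne_zero.2 hxy)
  have hw : Integrable fun u : ℝ => log (exp α + |u| / 2) ^ α * ‖g u‖ :=
    integrable_rpow_mul_norm_of_le_const_add_log hα.le hα.le (by fun_prop)
      (fun u => log_nonneg (by linarith [one_le_exp hα.le, abs_nonneg u]))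
      (fun u => (log_le_log (by positivity) (by linarith [abs_nonneg u])).trans
        ((log_add_le_log_add_log_one_add (one_le_exp hα.le) (abs_nonneg u)).trans_eq
          (by rw [log_exp])))
      hg hglog
  refine (norm_sub_le_of_min_le_mul hg hδ (c := 2 * log (exp α + 1 / |x - y|) ^ (-α))
    hw fun u => ?_).trans_eq (by ring)
  have hmin := min_two_le_log_exp_add_rpow_mul hα hh (div_nonneg (abs_nonneg u) zero_le_two)
  rwa [show 2 * |x - y| * (|u| / 2) = |x - y| * |u| by ring] at hmin

lemma norm_sub_le_log_modulus_of_abs_sub_eq_two_pow_mul (hα : 0 < α) (hg : Integrable g)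
    (hglog : Integrable fun u : ℝ => log (1 + |u|) ^ α * ‖g u‖)
    (hδ : ∀ x : ℝ, δ x =
      (1 / (2 * (π : ℂ))) * ∫ u : ℝ, Complex.exp (Complex.I * x * u) * g u)
    {j : ℕ} (hj : 1 ≤ j) {x y h : ℝ} (hh : 0 < h) (hxy : |x - y| = 2 ^ j * h) :
    ‖δ x - δ y‖ ≤ (j : ℝ) ^ α * ((1 / π) * ∫ u : ℝ, log (exp α + |u| + 1) ^ α * ‖g u‖) *
      log (exp α + 1 / h) ^ (-α) := by
  obtain ⟨n, rfl⟩ := Nat.exists_eq_add_of_le' hj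
  have hexp : 1 ≤ exp α := one_le_exp hα.le
  have hL : 0 < log (exp α + 1 / h) := hα.trans_le (le_log_exp_add (by positivity))
  have hw : Integrable fun u : ℝ => log (exp α + |u| + 1) ^ α * ‖g u‖ :=
    integrable_rpow_mul_norm_of_le_const_add_log (C := log (exp α + 1)) hα.le
      (log_nonneg (by linarith)) (by fun_prop)
      (fun u => log_nonneg (by linarith [abs_nonneg u]))
      (fun u => by
        rw [add_right_comm]
        exact log_add_le_log_add_log_one_add (by linarith) (abs_nonneg u))
      hg hglog
  refine (norm_sub_le_of_min_le_mul hg hδ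
    (c := 2 * (n + 1 : ℕ) ^ α * log (exp α + 1 / h) ^ (-α)) hw fun u => ?_).trans_eq (by ring)
  have hlog := log_exp_add_two_pow_mul_le hα.le n (abs_nonneg u)
  calc min 2 (|x - y| * |u|) = min 2 (2 * h * (2 ^ n * |u|)) := by rw [hxy]; ring_nf
    _ ≤ 2 * log (exp α + 1 / h) ^ (-α) * log (exp α + 2 ^ n * |u|) ^ α :=
        min_two_le_log_exp_add_rpow_mul hα hh (by positivity)
    _ ≤ 2 * log (exp α + 1 / h) ^ (-α) * ((n + 1 : ℕ) * log (exp α + |u| + 1)) ^ α :=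
        mul_le_mul_of_nonneg_left
          (rpow_le_rpow (hα.le.trans (le_log_exp_add (by positivity))) (by push_cast; exact hlog)
            hα.le)
          (mul_nonneg zero_le_two (rpow_nonneg hL.le _))
    _ = 2 * (n + 1 : ℕ) ^ α * log (exp α + 1 / h) ^ (-α) * log (exp α + |u| + 1) ^ α := by
        rw [mul_rpow (by positivity) (log_nonneg (by linarith [abs_nonneg u]))]
        ring

end LogModulus

/-- Lemma 4.3: summed logarithmic modulus of continuity of the dyadic system
`δ_{jk}(x) = 2^{j/2} δ(2^j x − k)` when `δ = (1/2π)∫ e^{ixu} g(u) du` is dominated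
by a monotone `Φ` and `g` has a finite logarithmic moment. -/
theorem summed_dyadic_translates_log_modulus
    (γ α : ℝ) (hγ : γ ∈ Set.Ioo (0 : ℝ) 1) (hα : 0 < α)
    (Φ : ℝ → ℝ)
    (hΦanti : AntitoneOn Φ (Set.Ici (0 : ℝ)))
    (hΦnonneg : ∀ x ∈ Set.Ici (0 : ℝ), 0 ≤ Φ x)
    (hΦγint : IntegrableOn (fun t : ℝ => Φ t ^ γ) (Set.Ioi (1 / 2 : ℝ)))
    (g : ℝ → ℂ) (hg : Integrable g)
    (hglog : Integrable (fun u : ℝ => Real.log (1 + |u|) ^ α * ‖g u‖))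
    (δ : ℝ → ℂ)
    (hδ : ∀ x : ℝ, δ x =
      (1 / (2 * (Real.pi : ℂ))) * ∫ u : ℝ, Complex.exp (Complex.I * x * u) * g u)
    (hδdom : ∀ x : ℝ, ‖δ x‖ ≤ Φ |x|)
    (δjk : ℕ → ℤ → ℝ → ℂ)
    (hδjk : ∀ (j : ℕ) (k : ℤ) (x : ℝ),
      δjk j k x = (((2 : ℝ) ^ ((j : ℝ) / 2) : ℝ) : ℂ) * δ ((2 : ℝ) ^ j * x - (k : ℝ)))
    (R0 R1 M : ℝ)
    (hR0 : R0 = (1 / Real.pi) * ∫ u : ℝ, Real.log (Real.exp α + |u| / 2) ^ α * ‖g u‖)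
    (hR1 : R1 = (1 / Real.pi) * ∫ u : ℝ, Real.log (Real.exp α + |u| + 1) ^ α * ‖g u‖)
    (hM : M = 3 * Φ 0 ^ γ + 4 * ∫ t in Set.Ioi (1 / 2 : ℝ), Φ t ^ γ) :
    ∀ x y : ℝ, x ≠ y →
      (Summable (fun k : ℤ => ‖δjk 0 k x - δjk 0 k y‖) ∧
        ∑' k : ℤ, ‖δjk 0 k x - δjk 0 k y‖ ≤
          2 * R0 ^ (1 - γ) * M *
            Real.log (Real.exp α + 1 / |x - y|) ^ (-(α * (1 - γ)))) ∧
      ∀ j : ℕ, 1 ≤ j →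
        Summable (fun k : ℤ => ‖δjk j k x - δjk j k y‖) ∧
        ∑' k : ℤ, ‖δjk j k x - δjk j k y‖ ≤
          (2 : ℝ) ^ ((j : ℝ) / 2 + 1) * (j : ℝ) ^ (α * (1 - γ)) * R1 ^ (1 - γ) * M *
            Real.log (Real.exp α + 1 / |x - y|) ^ (-(α * (1 - γ))) := by
  intro x y hxy
  subst hR0 hR1 hM
  have hh : 0 < |x - y| := abs_pos.2 (sub_ne_zero.2 hxy)
  have hL : 0 < log (exp α + 1 / |x - y|) := hα.trans_le (le_log_exp_add (by positivity))
  have hnorm : ∀ (j : ℕ) (k : ℤ) (x y : ℝ), ‖δjk j k x - δjk j k y‖ =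
      2 ^ ((j : ℝ) / 2) * ‖δ (2 ^ j * x - k) - δ (2 ^ j * y - k)‖ := fun j k x y => by
    rw [hδjk, hδjk, ← mul_sub, norm_mul, Complex.norm_real, Real.norm_of_nonneg (by positivity)]
  refine ⟨?_, fun j hj => ?_⟩
  · have h0 := summable_and_tsum_norm_sub_translates_le_log_modulus hγ hΦanti hΦnonneg
      hΦγint hδdom hL fun k => (norm_sub_le_log_modulus hα hg hglog hδ
        (sub_left_injective.ne hxy)).trans_eq (by rw [sub_sub_sub_cancel_right])
    simpa [hnorm] using h0
  obtain ⟨hs, ht⟩ := summable_and_tsum_norm_sub_translates_le_log_modulus hγ hΦanti hΦnonneg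
    hΦγint hδdom hL fun k => norm_sub_le_log_modulus_of_abs_sub_eq_two_pow_mul hα hg hglog hδ hj
      (x := 2 ^ j * x - k) (y := 2 ^ j * y - k) hh (by
        rw [sub_sub_sub_cancel_right, ← mul_sub, abs_mul, abs_of_pos (by positivity)])
  simp only [hnorm]
  refine ⟨hs.mul_left _, ?_⟩
  rw [tsum_mul_left]
  refine (mul_le_mul_of_nonneg_left ht (by positivity)).trans_eq ?_
  have hR1 : 0 ≤ (1 / π) * ∫ u : ℝ, log (exp α + |u| + 1) ^ α * ‖g u‖ :=
    mul_nonneg (by positivity) (integral_nonneg fun u => mul_nonneg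
      (rpow_nonneg (log_nonneg (by linarith [one_le_exp hα.le, abs_nonneg u])) _) (norm_nonneg _))
  rw [mul_rpow (by positivity) hR1, ← rpow_mul (by positivity),
    rpow_add_one two_ne_zero]
  ring
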